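/- Let d ≥ 1, let L be a bounded self-adjoint operator on ℓ²(ℤ^d; ℂ), and let N : ℂ → ℂ satisfy N(0) = 0, |N(z₁) − N(z₂)| ≤ C(max(|z₁|, |z₂|)) |z₁ − z₂| for all z₁, z₂ ∈ ℂ where C : [0,∞) → [0,∞) is increasing, and conj(z)·N(z) ∈ ℝ for all z ∈ ℂ. Then for every f ∈ ℓ²(ℤ^d; ℂ) there exists a unique continuously differentiable u : ℝ → ℓ²(ℤ^d; ℂ) with i u′(t) = L u(t) + N∘u(t) (N applied componentwise) and u(0) = f; moreover ‖u(t)‖_{ℓ²} = ‖f‖_{ℓ²} for all t, and for every R, T > 0 the data-to-solution map f ↦ u is Lipschitz continuous from the ball {‖f‖_{ℓ²} ≤ R} into C([−T, T]; ℓ²(ℤ^d)). -/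

import Mathlib

open Set MeasureTheory Filter Function
open scoped BigOperators NNReal BoundedContinuousFunction ENNReal

noncomputable section

namespace GWP




lemma abs_int_abs_pow (b : ℝ) (m : ℕ) :
    |∫ s in (0:ℝ)..b, |s| ^ m| = |b| ^ (m + 1) / (m + 1) := by
  rcases le_or_gt 0 b with hb | hb
  · have h1 : (∫ s in (0:ℝ)..b, |s| ^ m) = ∫ s in (0:ℝ)..b, s ^ m := by
      apply intervalIntegral.integral_congr
      intro s hs
      rw [Set.uIcc_of_le hb] at hs
      simp [abs_of_nonneg hs.1]
    rw [h1, integral_pow, abs_of_nonneg hb]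
    rw [abs_of_nonneg]
    · simp
    · simp only [zero_pow (Nat.succ_ne_zero m), sub_zero]
      positivity
  · have h1 : (∫ s in (0:ℝ)..b, |s| ^ m) = ∫ s in (0:ℝ)..b, (-s) ^ m := by
      apply intervalIntegral.integral_congr
      intro s hs
      rw [Set.uIcc_of_ge hb.le] at hs
      simp [abs_of_nonpos hs.2]
    have h2 : (∫ s in (0:ℝ)..b, (-s) ^ m) = ∫ s in (-b)..(0:ℝ), s ^ m := by
      simpa using intervalIntegral.integral_comp_neg (a := (0:ℝ)) (b := b) (fun s => s ^ m)
    rw [h1, h2, integral_pow, abs_of_neg hb]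
    have hbp : (0:ℝ) < -b := neg_pos.mpr hb
    have hb' : (0:ℝ) ≤ (-b) ^ (m+1) := pow_nonneg hbp.le _
    rw [abs_div]
    rw [abs_of_nonpos (by simp only [zero_pow (Nat.succ_ne_zero m), zero_sub]; linarith)]
    rw [abs_of_nonneg (by positivity : (0:ℝ) ≤ (m:ℝ)+1)]
    simp

variable {X : Type*} [NormedAddCommGroup X] [NormedSpace ℝ X] [CompleteSpace X]

lemma exists_global_flow (G : X → X) (K : ℝ≥0) (hG : LipschitzWith K G) (f : X) :
    ∃ u : ℝ → X, u 0 = f ∧ ∀ t : ℝ, HasDerivAt u (G (u t)) t := by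
  classical
  have hGc : Continuous G := hG.continuous
  -- Step 1: solutions of the clamped integral equation on [-a, a]
  have key : ∀ a : ℝ, 0 < a → ∃ u : ℝ → X, Continuous u ∧
      ∀ t ∈ Icc (-a) a, u t = f + ∫ s in (0:ℝ)..t, G (u s) := by
    intro a ha
    set c : ℝ → ℝ := fun t => max (-a) (min a t) with hc
    have hcc : Continuous c := continuous_const.max (continuous_const.min continuous_id)
    have hcabs : ∀ t, |c t| ≤ a := by
      intro t
      rw [abs_le]
      exact ⟨le_max_left _ _, max_le (by linarith) (min_le_left _ _)⟩
    have hceq : ∀ t ∈ Icc (-a) a, c t = t := by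
      intro t ht
      show max (-a) (min a t) = t
      rw [min_eq_right ht.2, max_eq_right ht.1]
    have hmem : ∀ b : ℝ, |b| ≤ a → ∀ s ∈ Set.uIoc (0:ℝ) b, s ∈ Icc (-a) a := by
      intro b hb s hs
      rcases hs with ⟨h1, h2⟩
      have hb' := abs_le.mp hb
      constructor
      · have : min 0 b ≥ -a := le_min (by linarith) hb'.1
        linarith
      · have : max 0 b ≤ a := max_le ha.le hb'.2
        linarith
    have hint : ∀ (u : ℝ →ᵇ X) (t₁ t₂ : ℝ), IntervalIntegrable (fun s => G (u s)) volume t₁ t₂ :=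
      fun u t₁ t₂ => ((hGc.comp u.continuous).intervalIntegrable _ _)
    set Φ : (ℝ →ᵇ X) → (ℝ →ᵇ X) := fun u =>
      BoundedContinuousFunction.ofNormedAddCommGroup
        (fun t => f + ∫ s in (0:ℝ)..(c t), G (u s))
        (continuous_const.add ((intervalIntegral.continuous_primitive (hint u) 0).comp hcc))
        (‖f‖ + ((K:ℝ) * ‖u‖ + ‖G 0‖) * a)
        (by
          intro t
          refine (norm_add_le _ _).trans ?_
          have h1 : ‖∫ s in (0:ℝ)..(c t), G (u s)‖ ≤ ((K:ℝ) * ‖u‖ + ‖G 0‖) * |c t - 0| := by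
            apply intervalIntegral.norm_integral_le_of_norm_le_const
            intro s _
            calc ‖G (u s)‖ = ‖(G (u s) - G 0) + G 0‖ := by rw [sub_add_cancel]
            _ ≤ ‖G (u s) - G 0‖ + ‖G 0‖ := norm_add_le _ _
            _ ≤ (K:ℝ) * ‖u s - 0‖ + ‖G 0‖ := by
                have := hG.dist_le_mul (u s) 0
                rw [dist_eq_norm, dist_eq_norm] at this
                linarith
            _ ≤ (K:ℝ) * ‖u‖ + ‖G 0‖ := by
                have := u.norm_coe_le_norm s
                have hK : (0:ℝ) ≤ K := K.coe_nonneg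
                rw [sub_zero]
                nlinarith
          have h2 : ((K:ℝ) * ‖u‖ + ‖G 0‖) * |c t - 0| ≤ ((K:ℝ) * ‖u‖ + ‖G 0‖) * a := by
            apply mul_le_mul_of_nonneg_left _ (by positivity)
            rw [sub_zero]; exact hcabs t
          linarith) with hΦ
    have hΦapp : ∀ (u : ℝ →ᵇ X) (t : ℝ), Φ u t = f + ∫ s in (0:ℝ)..(c t), G (u s) :=
      fun u t => rfl
    -- iterate estimates
    have hiter : ∀ (m : ℕ) (u v : ℝ →ᵇ X) (t : ℝ),
        dist ((Φ^[m] u) t) ((Φ^[m] v) t)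
          ≤ ((K:ℝ) * |c t|) ^ m / m.factorial * dist u v := by
      intro m
      induction m with
      | zero => intro u v t; simpa using BoundedContinuousFunction.dist_coe_le_dist t
      | succ m ih =>
        intro u v t
        rw [Function.iterate_succ_apply', Function.iterate_succ_apply']
        rw [hΦapp, hΦapp, dist_eq_norm]
        set D := dist u v with hD
        have hD0 : 0 ≤ D := dist_nonneg
        set C₀ : ℝ := (K:ℝ)^(m+1) * D / m.factorial with hC₀
        have hC₀0 : 0 ≤ C₀ := by positivity
        have hsub : (f + ∫ s in (0:ℝ)..(c t), G ((Φ^[m] u) s))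
              - (f + ∫ s in (0:ℝ)..(c t), G ((Φ^[m] v) s))
            = ∫ s in (0:ℝ)..(c t), (G ((Φ^[m] u) s) - G ((Φ^[m] v) s)) := by
          rw [intervalIntegral.integral_sub (hint _ _ _) (hint _ _ _)]
          abel
        rw [hsub]
        have hb1 : ‖∫ s in (0:ℝ)..(c t), (G ((Φ^[m] u) s) - G ((Φ^[m] v) s))‖
            ≤ |∫ s in (0:ℝ)..(c t), C₀ * |s| ^ m| := by
          apply intervalIntegral.norm_integral_le_abs_of_norm_le
          · apply MeasureTheory.ae_restrict_of_forall_mem measurableSet_uIoc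
            intro s hs
            have hsa : s ∈ Icc (-a) a := hmem (c t) (hcabs t) s hs
            have h2 : ‖G ((Φ^[m] u) s) - G ((Φ^[m] v) s)‖
                ≤ (K:ℝ) * dist ((Φ^[m] u) s) ((Φ^[m] v) s) := by
              have := hG.dist_le_mul ((Φ^[m] u) s) ((Φ^[m] v) s)
              rw [dist_eq_norm] at this
              exact this
            refine h2.trans ?_
            have h3 := ih u v s
            rw [hceq s hsa] at h3
            have hK : (0:ℝ) ≤ K := K.coe_nonneg
            calc (K:ℝ) * dist ((Φ^[m] u) s) ((Φ^[m] v) s)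
                ≤ (K:ℝ) * (((K:ℝ) * |s|) ^ m / m.factorial * D) := by
                  exact mul_le_mul_of_nonneg_left h3 hK
            _ = C₀ * |s| ^ m := by
                  rw [hC₀, mul_pow]; ring
          · exact (continuous_const.mul (continuous_abs.pow m)).intervalIntegrable _ _
        refine hb1.trans ?_
        rw [intervalIntegral.integral_const_mul, abs_mul, abs_of_nonneg hC₀0, abs_int_abs_pow]
        apply le_of_eq
        rw [hC₀, mul_pow, Nat.factorial_succ]
        have hf1 : ((m:ℝ) + 1) ≠ 0 := by positivity
        have hf2 : ((m.factorial : ℝ)) ≠ 0 := by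
          exact_mod_cast m.factorial_pos.ne'
        push_cast
        field_simp
    -- contraction of an iterate
    obtain ⟨m, hm⟩ : ∃ m : ℕ, ((K:ℝ) * a) ^ m / m.factorial < 1 := by
      have h1 := FloorSemiring.tendsto_pow_div_factorial_atTop (K := ℝ) ((K:ℝ) * a)
      exact (h1.eventually (gt_mem_nhds one_pos)).exists
    set κ : ℝ≥0 := ⟨((K:ℝ)*a)^m / m.factorial, by positivity⟩ with hκ
    have hΦlip : LipschitzWith κ (Φ^[m]) := by
      apply LipschitzWith.of_dist_le_mul
      intro u v
      rw [BoundedContinuousFunction.dist_le (by positivity)]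
      intro t
      refine (hiter m u v t).trans ?_
      apply mul_le_mul_of_nonneg_right _ dist_nonneg
      show ((K:ℝ) * |c t|) ^ m / m.factorial ≤ ((K:ℝ)*a)^m / m.factorial
      have hfp : (0:ℝ) < m.factorial := by exact_mod_cast m.factorial_pos
      have h4 : ((K:ℝ) * |c t|) ^ m ≤ ((K:ℝ) * a) ^ m :=
        pow_le_pow_left₀ (by positivity) (mul_le_mul_of_nonneg_left (hcabs t) K.coe_nonneg) m
      exact (div_le_div_iff_of_pos_right hfp).mpr h4
    have hcontr : ContractingWith κ (Φ^[m]) := ⟨by exact_mod_cast hm, hΦlip⟩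
    have hne : Nonempty (ℝ →ᵇ X) := ⟨0⟩
    have hfix : Function.IsFixedPt Φ (hcontr.fixedPoint (Φ^[m])) :=
      ContractingWith.isFixedPt_fixedPoint_iterate (f := Φ) hcontr
    set u₀ := hcontr.fixedPoint (Φ^[m]) with hu₀
    refine ⟨⇑u₀, u₀.continuous, ?_⟩
    intro t ht
    conv_lhs => rw [← hfix]
    rw [hΦapp, hceq t ht]
  -- Step 2: C¹ solutions on [-(n+1), n+1]
  have key2 : ∀ n : ℕ, ∃ u : ℝ → X, Continuous u ∧ u 0 = f ∧
      ∀ t ∈ Ioo (-(n+1:ℝ)) (n+1), HasDerivAt u (G (u t)) t := by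
    intro n
    obtain ⟨u, hu, heq⟩ := key ((n:ℝ)+1) (by positivity)
    refine ⟨u, hu, ?_, ?_⟩
    · have h0 := heq 0 ⟨neg_nonpos.mpr (by positivity), by positivity⟩
      simpa using h0
    · intro t ht
      have hmemt : Ioo (-((n:ℝ)+1)) ((n:ℝ)+1) ∈ nhds t := isOpen_Ioo.mem_nhds ht
      have hloc : u =ᶠ[nhds t] fun s => f + ∫ τ in (0:ℝ)..s, G (u τ) := by
        filter_upwards [hmemt] with s hs
        exact heq s (Ioo_subset_Icc_self hs)
      have hcont : Continuous fun s => G (u s) := hGc.comp hu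
      have hd : HasDerivAt (fun s => f + ∫ τ in (0:ℝ)..s, G (u τ)) (G (u t)) t := by
        have h1 : HasDerivAt (fun s => ∫ τ in (0:ℝ)..s, G (u τ)) (G (u t)) t :=
          intervalIntegral.integral_hasDerivAt_right (hcont.intervalIntegrable _ _)
            (hcont.stronglyMeasurableAtFilter _ _) hcont.continuousAt
        simpa using h1.const_add f
      exact hd.congr_of_eventuallyEq hloc
  choose w hwc hw0 hwd using key2
  -- consistency
  have hcons : ∀ m n : ℕ, m ≤ n → Set.EqOn (w m) (w n) (Icc (-((m:ℝ)+1)) ((m:ℝ)+1)) := by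
    intro m n hmn
    have hsub : Ioo (-((m:ℝ)+1)) ((m:ℝ)+1) ⊆ Ioo (-((n:ℝ)+1)) ((n:ℝ)+1) := by
      have hmn' : (m:ℝ) ≤ n := by exact_mod_cast hmn
      apply Ioo_subset_Ioo <;> linarith
    exact ODE_solution_unique_of_mem_Icc (v := fun _ x => G x) (s := fun _ => univ)
      (fun _ _ => hG.lipschitzOnWith)
      (⟨neg_lt_zero.mpr (by positivity), by positivity⟩ : (0:ℝ) ∈ Ioo _ _)
      (hwc m).continuousOn (fun t ht => hwd m t ht) (fun _ _ => trivial)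
      (hwc n).continuousOn (fun t ht => hwd n t (hsub ht)) (fun _ _ => trivial)
      ((hw0 m).trans (hw0 n).symm)
  set u : ℝ → X := fun t => w ⌊|t|⌋₊ t with hu
  have hueq : ∀ (n : ℕ) (t : ℝ), |t| ≤ (n:ℝ) + 1 → u t = w n t := by
    intro n t ht
    have hfl : |t| < (⌊|t|⌋₊:ℝ) + 1 := Nat.lt_floor_add_one _
    rcases le_total (⌊|t|⌋₊) n with h | h
    · have hmem' : t ∈ Icc (-((⌊|t|⌋₊:ℝ)+1)) ((⌊|t|⌋₊:ℝ)+1) := by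
        have := abs_le.mp hfl.le
        exact ⟨this.1, this.2⟩
      exact hcons _ n h hmem'
    · have hmem' : t ∈ Icc (-((n:ℝ)+1)) ((n:ℝ)+1) := by
        have := abs_le.mp ht
        exact ⟨this.1, this.2⟩
      exact (hcons n _ h hmem').symm
  have hud : ∀ t, HasDerivAt u (G (u t)) t := by
    intro t
    set n := ⌊|t|⌋₊ with hn
    have hfl : |t| < (n:ℝ) + 1 := Nat.lt_floor_add_one _
    have hmemt : t ∈ Ioo (-((n:ℝ)+1)) ((n:ℝ)+1) := by
      have := abs_lt.mp hfl
      exact ⟨this.1, this.2⟩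
    have hloc : u =ᶠ[nhds t] w n := by
      filter_upwards [isOpen_Ioo.mem_nhds hmemt] with s hs
      exact hueq n s (abs_le.mpr ⟨hs.1.le, hs.2.le⟩)
    have hd := hwd n t hmemt
    rw [← hueq n t hfl.le] at hd
    exact hd.congr_of_eventuallyEq hloc
  refine ⟨u, ?_, hud⟩
  have h00 := hueq 0 0 (by simp)
  rw [hw0 0] at h00
  simpa using h00



variable {ι : Type*}

lemma summable_sq {y : lp (fun _ : ι => ℂ) 2} :
    Summable fun i => ‖y i‖ ^ ((2:ℝ≥0∞)).toReal :=
  (lp.memℓp y).summable (by norm_num)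

lemma memℓp_of_le {x : ∀ _ : ι, ℂ} {y : lp (fun _ : ι => ℂ) 2} {c : ℝ} (hc : 0 ≤ c)
    (h : ∀ n, ‖x n‖ ≤ c * ‖y n‖) : Memℓp x 2 := by
  apply memℓp_gen
  refine Summable.of_nonneg_of_le (fun i => Real.rpow_nonneg (norm_nonneg _) _)
    (fun i => ?_) ((summable_sq (y := y)).mul_left (c ^ ((2:ℝ≥0∞)).toReal))
  have h1 : ‖x i‖ ^ ((2:ℝ≥0∞)).toReal ≤ (c * ‖y i‖) ^ ((2:ℝ≥0∞)).toReal :=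
    Real.rpow_le_rpow (norm_nonneg _) (h i) (by norm_num)
  rwa [Real.mul_rpow hc (norm_nonneg _)] at h1

lemma lp2_norm_le_of_le {x y : lp (fun _ : ι => ℂ) 2} {c : ℝ} (hc : 0 ≤ c)
    (h : ∀ n, ‖x n‖ ≤ c * ‖y n‖) : ‖x‖ ≤ c * ‖y‖ := by
  apply lp.norm_le_of_tsum_le (by norm_num) (mul_nonneg hc (norm_nonneg _))
  have h1 : ∀ i, ‖x i‖ ^ ((2:ℝ≥0∞)).toReal
      ≤ c ^ ((2:ℝ≥0∞)).toReal * ‖y i‖ ^ ((2:ℝ≥0∞)).toReal := by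
    intro i
    have h1 : ‖x i‖ ^ ((2:ℝ≥0∞)).toReal ≤ (c * ‖y i‖) ^ ((2:ℝ≥0∞)).toReal :=
      Real.rpow_le_rpow (norm_nonneg _) (h i) (by norm_num)
    rwa [Real.mul_rpow hc (norm_nonneg _)] at h1
  calc (∑' i, ‖x i‖ ^ ((2:ℝ≥0∞)).toReal)
      ≤ ∑' i, c ^ ((2:ℝ≥0∞)).toReal * ‖y i‖ ^ ((2:ℝ≥0∞)).toReal := by
        apply Summable.tsum_le_tsum h1 ((lp.memℓp x).summable (by norm_num))
        exact (summable_sq (y := y)).mul_left _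
    _ = c ^ ((2:ℝ≥0∞)).toReal * ∑' i, ‖y i‖ ^ ((2:ℝ≥0∞)).toReal := tsum_mul_left
    _ = (c * ‖y‖) ^ ((2:ℝ≥0∞)).toReal := by
        rw [← lp.norm_rpow_eq_tsum (by norm_num) y, Real.mul_rpow hc (norm_nonneg _)]

/-- Radial truncation onto the closed disc of radius `r` in `ℂ`. -/
def cproj (r : ℝ) (z : ℂ) : ℂ := if ‖z‖ ≤ r then z else ((r / ‖z‖ : ℝ) : ℂ) * z

lemma cproj_of_le {r : ℝ} {z : ℂ} (h : ‖z‖ ≤ r) : cproj r z = z := if_pos h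

lemma cproj_norm_le {r : ℝ} (hr : 0 ≤ r) (z : ℂ) : ‖cproj r z‖ ≤ r := by
  unfold cproj
  split_ifs with h
  · exact h
  · push_neg at h
    have hz : (0:ℝ) < ‖z‖ := lt_of_le_of_lt hr h
    rw [norm_mul, Complex.norm_real, Real.norm_eq_abs, abs_of_nonneg (by positivity)]
    rw [div_mul_cancel₀ _ hz.ne']

lemma cproj_lip_aux {r : ℝ} (hr : 0 ≤ r) {z w : ℂ} (hz : ‖z‖ ≤ r) (hw : r < ‖w‖) :
    ‖cproj r z - cproj r w‖ ≤ 2 * ‖z - w‖ := by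
  have hw0 : (0:ℝ) < ‖w‖ := lt_of_le_of_lt hr hw
  rw [cproj_of_le hz]
  rw [cproj, if_neg (not_le.mpr hw)]
  have key : z - ((r / ‖w‖ : ℝ) : ℂ) * w = (z - w) + (((1 - r / ‖w‖ : ℝ) : ℂ) * w) := by
    push_cast
    ring
  rw [key]
  refine (norm_add_le _ _).trans ?_
  have h2 : ‖(((1 - r / ‖w‖ : ℝ) : ℂ) * w)‖ = ‖w‖ - r := by
    rw [norm_mul, Complex.norm_real, Real.norm_eq_abs]
    rw [abs_of_nonneg (by rw [sub_nonneg]; exact (div_le_one hw0).mpr hw.le)]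
    rw [sub_mul, one_mul, div_mul_cancel₀ _ hw0.ne']
  rw [h2]
  have h3 : ‖w‖ - r ≤ ‖w‖ - ‖z‖ := by linarith
  have h4 : ‖w‖ - ‖z‖ ≤ ‖z - w‖ := by
    rw [norm_sub_rev]
    exact norm_sub_norm_le _ _
  linarith

lemma cproj_lip {r : ℝ} (hr : 0 ≤ r) (z w : ℂ) :
    ‖cproj r z - cproj r w‖ ≤ 2 * ‖z - w‖ := by
  rcases le_or_gt ‖z‖ r with hz | hz <;> rcases le_or_gt ‖w‖ r with hw | hw
  · rw [cproj_of_le hz, cproj_of_le hw]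
    have := norm_nonneg (z - w)
    linarith
  · exact cproj_lip_aux hr hz hw
  · rw [norm_sub_rev, norm_sub_rev z w]
    exact cproj_lip_aux hr hw hz
  · have hz0 : (0:ℝ) < ‖z‖ := lt_of_le_of_lt hr hz
    have hw0 : (0:ℝ) < ‖w‖ := lt_of_le_of_lt hr hw
    rw [cproj, if_neg (not_le.mpr hz), cproj, if_neg (not_le.mpr hw)]
    have key : ((r / ‖z‖ : ℝ) : ℂ) * z - ((r / ‖w‖ : ℝ) : ℂ) * w
        = ((r / ‖z‖ : ℝ) : ℂ) * (z - w) + (((r / ‖z‖ - r / ‖w‖ : ℝ) : ℂ)) * w := by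
      push_cast
      ring
    rw [key]
    refine (norm_add_le _ _).trans ?_
    have h1 : ‖((r / ‖z‖ : ℝ) : ℂ) * (z - w)‖ ≤ ‖z - w‖ := by
      rw [norm_mul, Complex.norm_real, Real.norm_eq_abs, abs_of_nonneg (by positivity)]
      have : r / ‖z‖ ≤ 1 := (div_le_one hz0).mpr hz.le
      nlinarith [norm_nonneg (z - w)]
    have h2 : ‖(((r / ‖z‖ - r / ‖w‖ : ℝ) : ℂ)) * w‖ ≤ ‖z - w‖ := by
      rw [norm_mul, Complex.norm_real, Real.norm_eq_abs]
      have hd : r / ‖z‖ - r / ‖w‖ = r * (‖w‖ - ‖z‖) / (‖z‖ * ‖w‖) := by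
        rw [div_sub_div _ _ hz0.ne' hw0.ne']
        congr 1
        ring
      rw [hd, abs_div, abs_mul]
      rw [abs_of_nonneg hr, abs_of_nonneg (by positivity : (0:ℝ) ≤ ‖z‖ * ‖w‖)]
      have h5 : |‖w‖ - ‖z‖| ≤ ‖z - w‖ := by
        rw [abs_sub_comm]
        exact abs_norm_sub_norm_le z w
      rw [div_mul_eq_mul_div, div_le_iff₀ (by positivity)]
      calc r * |‖w‖ - ‖z‖| * ‖w‖ ≤ ‖z‖ * |‖w‖ - ‖z‖| * ‖w‖ :=
            mul_le_mul_of_nonneg_right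
              (mul_le_mul_of_nonneg_right hz.le (abs_nonneg _)) (norm_nonneg w)
        _ ≤ ‖z - w‖ * (‖z‖ * ‖w‖) := by
            nlinarith [mul_le_mul_of_nonneg_right h5
              (mul_nonneg (norm_nonneg z) (norm_nonneg w))]
    linarith





variable {X : Type*} [NormedAddCommGroup X] [NormedSpace ℝ X] [CompleteSpace X]

lemma flow_dist_forward (G : X → X) (K : ℝ≥0) (hG : LipschitzWith K G)
    {u v : ℝ → X} (hu : ∀ t, HasDerivAt u (G (u t)) t) (hv : ∀ t, HasDerivAt v (G (v t)) t)
    (T : ℝ) (hT : 0 ≤ T) :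
    ∀ t ∈ Icc (0:ℝ) T, dist (u t) (v t) ≤ dist (u 0) (v 0) * Real.exp ((K:ℝ) * T) := by
  intro t ht
  have h1 := dist_le_of_trajectories_ODE (v := fun _ x => G x) (fun _ => hG)
    (fun s _ => (hu s).continuousAt.continuousWithinAt)
    (fun s _ => (hu s).hasDerivWithinAt)
    (fun s _ => (hv s).continuousAt.continuousWithinAt)
    (fun s _ => (hv s).hasDerivWithinAt)
    (le_refl (dist (u 0) (v 0))) t ht
  refine h1.trans ?_
  have h2 : Real.exp ((K:ℝ) * (t - 0)) ≤ Real.exp ((K:ℝ) * T) := by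
    apply Real.exp_le_exp.mpr
    have := ht.2
    have hK : (0:ℝ) ≤ K := K.coe_nonneg
    nlinarith [ht.1]
  exact mul_le_mul_of_nonneg_left h2 dist_nonneg

lemma flow_reverse (G : X → X) {u : ℝ → X} (hu : ∀ t, HasDerivAt u (G (u t)) t) :
    ∀ t, HasDerivAt (fun s => u (-s)) ((fun x => -G x) ((fun s => u (-s)) t)) t := by
  intro t
  have h1 : HasDerivAt (fun s : ℝ => u (-s)) ((-1 : ℝ) • G (u (-t))) t := by
    have hneg : HasDerivAt (fun s : ℝ => -s) (-1 : ℝ) t := by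
      exact hasDerivAt_neg' t
    exact (hu (-t)).scomp t hneg
  simpa using h1

lemma lipschitz_neg (G : X → X) (K : ℝ≥0) (hG : LipschitzWith K G) :
    LipschitzWith K (fun x => -G x) := by
  apply LipschitzWith.of_dist_le_mul
  intro x y
  rw [dist_neg_neg]
  exact hG.dist_le_mul x y

lemma flow_dist_two_sided (G : X → X) (K : ℝ≥0) (hG : LipschitzWith K G)
    {u v : ℝ → X} (hu : ∀ t, HasDerivAt u (G (u t)) t) (hv : ∀ t, HasDerivAt v (G (v t)) t)
    (T : ℝ) (hT : 0 ≤ T) :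
    ∀ t ∈ Icc (-T) T, dist (u t) (v t) ≤ dist (u 0) (v 0) * Real.exp ((K:ℝ) * T) := by
  intro t ht
  rcases le_total 0 t with h | h
  · exact flow_dist_forward G K hG hu hv T hT t ⟨h, ht.2⟩
  · have h1 := flow_dist_forward (fun x => -G x) K (lipschitz_neg G K hG)
      (flow_reverse G hu) (flow_reverse G hv) T hT (-t) ⟨by linarith, by linarith [ht.1]⟩
    simpa using h1

lemma flow_unique (G : X → X) (K : ℝ≥0) (hG : LipschitzWith K G)
    {u v : ℝ → X} (hu : ∀ t, HasDerivAt u (G (u t)) t) (hv : ∀ t, HasDerivAt v (G (v t)) t)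
    (h0 : u 0 = v 0) : u = v := by
  funext t
  have h1 := flow_dist_two_sided G K hG hu hv |t| (abs_nonneg t) t ⟨neg_abs_le t, le_abs_self t⟩
  rw [h0, dist_self, zero_mul] at h1
  exact dist_le_zero.mp h1

lemma conserve {Y : Type*} [NormedAddCommGroup Y] [InnerProductSpace ℂ Y] [CompleteSpace Y]
    (L : Y →L[ℂ] Y) (hL : IsSelfAdjoint L) (P : Y → Y)
    (hP : ∀ x : Y, (inner (𝕜 := ℂ) x (P x)).im = 0)
    {u : ℝ → Y} (hu : ∀ t, HasDerivAt u ((-Complex.I) • (L (u t) + P (u t))) t) (t : ℝ) :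
    ‖u t‖ = ‖u 0‖ := by
  have hLim : ∀ x : Y, (inner (𝕜 := ℂ) x (L x)).im = 0 := by
    intro x
    have h1 : inner (𝕜 := ℂ) x (L x) = inner (𝕜 := ℂ) (L x) x := by
      conv_lhs => rw [← hL.adjoint_eq]
      rw [ContinuousLinearMap.adjoint_inner_right]
    have h2 : inner (𝕜 := ℂ) (L x) x = (starRingEnd ℂ) (inner (𝕜 := ℂ) x (L x)) :=
      (inner_conj_symm (L x) x).symm
    have h3 := h1.trans h2
    have := Complex.conj_eq_iff_im.mp h3.symm
    exact this
  set g : ℝ → ℝ := fun s => (inner (𝕜 := ℂ) (u s) (u s)).re with hg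
  have hgderiv : ∀ s, HasDerivAt g 0 s := by
    intro s
    have h1 := (hu s).inner ℂ (hu s)
    have h2 := (Complex.reCLM.hasFDerivAt.comp_hasDerivAt s h1)
    have h3 : Complex.reCLM
        (inner (𝕜 := ℂ) (u s) ((-Complex.I) • (L (u s) + P (u s)))
          + inner (𝕜 := ℂ) ((-Complex.I) • (L (u s) + P (u s))) (u s)) = 0 := by
      set w : Y := L (u s) + P (u s) with hw
      have him : (inner (𝕜 := ℂ) (u s) w).im = 0 := by
        rw [hw, inner_add_right]
        rw [Complex.add_im, hLim (u s), hP (u s)]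
        norm_num
      have h4 : inner (𝕜 := ℂ) (u s) ((-Complex.I) • w)
          = (-Complex.I) * inner (𝕜 := ℂ) (u s) w := inner_smul_right _ _ _
      have h5 : inner (𝕜 := ℂ) ((-Complex.I) • w) (u s)
          = (starRingEnd ℂ) (inner (𝕜 := ℂ) (u s) ((-Complex.I) • w)) :=
        (inner_conj_symm ((-Complex.I) • w) (u s)).symm
      rw [h5, h4]
      simp only [Complex.reCLM_apply, Complex.add_re, Complex.conj_re]
      rw [Complex.mul_re]
      simp [him]
    rw [h3] at h2
    exact h2
  have hconst : g t = g 0 := by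
    have hdiff : Differentiable ℝ g := fun s => (hgderiv s).differentiableAt
    have hderiv0 : ∀ s, deriv g s = 0 := fun s => (hgderiv s).deriv
    exact is_const_of_deriv_eq_zero hdiff hderiv0 t 0
  have hnorm : ∀ s : ℝ, g s = ‖u s‖ ^ 2 := fun s => inner_self_eq_norm_sq (𝕜 := ℂ) (u s)
  have h6 : ‖u t‖ ^ 2 = ‖u 0‖ ^ 2 := by rw [← hnorm, ← hnorm]; exact hconst
  have h7 := congrArg Real.sqrt h6
  rwa [Real.sqrt_sq (norm_nonneg _), Real.sqrt_sq (norm_nonneg _)] at h7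

lemma inner_comp_im_zero {ι : Type*} (M : ℂ → ℂ)
    (hM : ∀ z : ℂ, ((starRingEnd ℂ) z * M z).im = 0)
    (x P : lp (fun _ : ι => ℂ) 2) (hP : ∀ n, P n = M (x n)) :
    (inner (𝕜 := ℂ) x P).im = 0 := by
  rw [lp.inner_eq_tsum]
  have hsum := lp.summable_inner (𝕜 := ℂ) x P
  have h1 : Complex.imCLM (∑' n, inner (𝕜 := ℂ) (x n) (P n)) = 0 := by
    rw [ContinuousLinearMap.map_tsum _ hsum]
    have h2 : ∀ n, Complex.imCLM (inner (𝕜 := ℂ) (x n) (P n)) = 0 := by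
      intro n
      rw [hP n]
      have : inner (𝕜 := ℂ) (x n) (M (x n)) = (starRingEnd ℂ) (x n) * M (x n) :=
        (RCLike.inner_apply _ _).trans (mul_comm _ _)
      rw [this]
      exact hM (x n)
    simp only [h2]
    exact tsum_zero
  exact h1




end GWP
open scoped BigOperators

/-- ℓ²(ℤ^d; ℂ): square-summable complex sequences indexed by ℤ^d. -/
abbrev SeqD (d : ℕ) := lp (fun _ : Fin d → ℤ => ℂ) 2

/-- `u : ℝ → ℓ²(ℤ^d)` is a global C¹ solution of `i u' = L u + N ∘ u` with `u 0 = f`,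
where the nonlinearity `N` is applied componentwise. -/
def IsSol {d : ℕ} (L : SeqD d →L[ℂ] SeqD d) (N : ℂ → ℂ) (f : SeqD d)
    (u : ℝ → SeqD d) : Prop :=
  ContDiff ℝ 1 u ∧ u 0 = f ∧
    ∀ t : ℝ, ∀ n : Fin d → ℤ,
      Complex.I * (deriv u t) n = (L (u t)) n + N ((u t) n)

set_option maxHeartbeats 1000000 in
/-- Global well-posedness, conservation of the ℓ² norm, and local Lipschitz continuity
of the data-to-solution map for `i u' = L u + N∘u` on ℓ²(ℤ^d). -/
theorem global_wellposedness_l2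
    (d : ℕ) (hd : 1 ≤ d)
    (L : SeqD d →L[ℂ] SeqD d) (hL : IsSelfAdjoint L)
    (N : ℂ → ℂ) (C : ℝ → ℝ)
    (hC0 : ∀ x : ℝ, 0 ≤ x → 0 ≤ C x)
    (hCmono : MonotoneOn C (Set.Ici (0 : ℝ)))
    (hN0 : N 0 = 0)
    (hNlip : ∀ z₁ z₂ : ℂ, ‖N z₁ - N z₂‖ ≤ C (max ‖z₁‖ ‖z₂‖) * ‖z₁ - z₂‖)
    (hNreal : ∀ z : ℂ, ((starRingEnd ℂ) z * N z).im = 0) :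
    -- existence and uniqueness of a global C¹ solution for every ℓ² datum
    (∀ f : SeqD d, ∃! u : ℝ → SeqD d, IsSol L N f u)
    -- conservation of the ℓ² norm
    ∧ (∀ (f : SeqD d) (u : ℝ → SeqD d), IsSol L N f u → ∀ t : ℝ, ‖u t‖ = ‖f‖)
    -- Lipschitz continuity of the data-to-solution map on balls, in C([-T,T]; ℓ²)
    ∧ (∀ R T : ℝ, 0 < R → 0 < T → ∃ K : ℝ,
        ∀ (f g : SeqD d) (u v : ℝ → SeqD d), IsSol L N f u → IsSol L N g v →
          ‖f‖ ≤ R → ‖g‖ ≤ R →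
          ∀ t ∈ Set.Icc (-T) T, ‖u t - v t‖ ≤ K * ‖f - g‖) := by
  classical
  have hN2 : ∀ z : ℂ, ‖N z‖ ≤ C ‖z‖ * ‖z‖ := by
    intro z
    have h := hNlip z 0
    simpa [hN0, norm_zero, max_eq_left (norm_nonneg z)] using h
  have hmemN : ∀ x : SeqD d, Memℓp (fun n => N (x n)) 2 := by
    intro x
    refine GWP.memℓp_of_le (y := x) (c := C ‖x‖) (hC0 _ (norm_nonneg x)) (fun n => ?_)
    calc ‖N (x n)‖ ≤ C ‖x n‖ * ‖x n‖ := hN2 _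
      _ ≤ C ‖x‖ * ‖x n‖ := by
          apply mul_le_mul_of_nonneg_right _ (norm_nonneg _)
          exact hCmono (Set.mem_Ici.mpr (norm_nonneg _)) (Set.mem_Ici.mpr (norm_nonneg _))
            (lp.norm_apply_le_norm (by norm_num) x n)
  set NN : SeqD d → SeqD d := fun x => ⟨fun n => N (x n), hmemN x⟩ with hNNdef
  have hNNapp : ∀ (x : SeqD d) (n : Fin d → ℤ), NN x n = N (x n) := fun x n => rfl
  -- X-valued reformulation of IsSol
  have hXval : ∀ (f : SeqD d) (u : ℝ → SeqD d), IsSol L N f u →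
      ∀ t, HasDerivAt u ((-Complex.I) • (L (u t) + NN (u t))) t := by
    intro f u hu t
    obtain ⟨hsm, hu0, heq⟩ := hu
    have hdiff : Differentiable ℝ u := hsm.differentiable one_ne_zero
    have hder : HasDerivAt u (deriv u t) t := (hdiff t).hasDerivAt
    have hcomp : deriv u t = (-Complex.I) • (L (u t) + NN (u t)) := by
      apply lp.ext
      funext n
      have h3 := heq t n
      have h4 : -Complex.I * (Complex.I * (deriv u t) n)
          = -Complex.I * ((L (u t)) n + N (u t n)) := by rw [h3]
      have h5 : (deriv u t) n = -Complex.I * ((L (u t)) n + N (u t n)) := by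
        rw [← h4, ← mul_assoc]
        simp [Complex.I_mul_I]
      show (deriv u t) n = (((-Complex.I) • (L (u t) + NN (u t)) : SeqD d) : ∀ _, ℂ) n
      rw [lp.coeFn_smul, Pi.smul_apply, lp.coeFn_add, Pi.add_apply, hNNapp, smul_eq_mul]
      exact h5
    rw [← hcomp]
    exact hder
  have hNNim : ∀ x : SeqD d, (inner (𝕜 := ℂ) x (NN x)).im = 0 := fun x =>
    GWP.inner_comp_im_zero N hNreal x (NN x) (fun n => rfl)
  -- conservation for arbitrary solutions
  have hconsN : ∀ (f : SeqD d) (u : ℝ → SeqD d), IsSol L N f u → ∀ t, ‖u t‖ = ‖f‖ := by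
    intro f u hu t
    have h1 := GWP.conserve L hL NN hNNim (hXval f u hu) t
    rwa [hu.2.1] at h1
  -- master construction for a truncated globally Lipschitz field
  have master : ∀ r : ℝ, 0 < r → ∃ (G : SeqD d → SeqD d) (K₀ : ℝ≥0),
      LipschitzWith K₀ G ∧
      (∀ x : SeqD d, ‖x‖ ≤ r → G x = (-Complex.I) • (L x + NN x)) ∧
      (∀ u : ℝ → SeqD d, (∀ t, HasDerivAt u (G (u t)) t) → ∀ t, ‖u t‖ = ‖u 0‖) ∧
      (∀ f : SeqD d, ∃ u : ℝ → SeqD d, u 0 = f ∧ ∀ t, HasDerivAt u (G (u t)) t) := by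
    intro r hr
    set Nr : ℂ → ℂ := fun z => N (GWP.cproj r z) with hNrdef
    have hNr0 : Nr 0 = 0 := by
      show N (GWP.cproj r 0) = 0
      rw [GWP.cproj_of_le (by simpa using hr.le), hN0]
    have hNrlip : ∀ z w : ℂ, ‖Nr z - Nr w‖ ≤ (C r * 2) * ‖z - w‖ := by
      intro z w
      have h1 := hNlip (GWP.cproj r z) (GWP.cproj r w)
      have h2 : C (max ‖GWP.cproj r z‖ ‖GWP.cproj r w‖) ≤ C r := by
        apply hCmono (Set.mem_Ici.mpr (le_max_of_le_left (norm_nonneg _)))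
          (Set.mem_Ici.mpr hr.le)
        exact max_le (GWP.cproj_norm_le hr.le z) (GWP.cproj_norm_le hr.le w)
      have h3 := GWP.cproj_lip hr.le z w
      calc ‖Nr z - Nr w‖
          ≤ C (max ‖GWP.cproj r z‖ ‖GWP.cproj r w‖) * ‖GWP.cproj r z - GWP.cproj r w‖ := h1
        _ ≤ C r * (2 * ‖z - w‖) := by
            apply mul_le_mul h2 h3 (norm_nonneg _) (hC0 r hr.le)
        _ = (C r * 2) * ‖z - w‖ := by ring
    have hCr2 : (0:ℝ) ≤ C r * 2 := by
      have := hC0 r hr.le; linarith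
    have hNrb : ∀ z : ℂ, ‖Nr z‖ ≤ (C r * 2) * ‖z‖ := by
      intro z
      have := hNrlip z 0
      simpa [hNr0] using this
    have hNrReal : ∀ z : ℂ, ((starRingEnd ℂ) z * Nr z).im = 0 := by
      intro z
      rcases le_or_gt ‖z‖ r with h | h
      · show ((starRingEnd ℂ) z * N (GWP.cproj r z)).im = 0
        rw [GWP.cproj_of_le h]
        exact hNreal z
      · have hz0 : (0:ℝ) < ‖z‖ := lt_trans hr h
        have hzeq : z = ((‖z‖ / r : ℝ) : ℂ) * GWP.cproj r z := by
          rw [GWP.cproj, if_neg (not_le.mpr h), ← mul_assoc, ← Complex.ofReal_mul]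
          rw [div_mul_div_comm, mul_comm ‖z‖ r, div_self (by positivity)]
          simp
        show ((starRingEnd ℂ) z * N (GWP.cproj r z)).im = 0
        set wz : ℂ := GWP.cproj r z with hwz
        conv_lhs => rw [hzeq]
        rw [map_mul, Complex.conj_ofReal, mul_assoc, Complex.im_ofReal_mul, hNreal wz, mul_zero]
    have hmemNr : ∀ x : SeqD d, Memℓp (fun n => Nr (x n)) 2 := fun x =>
      GWP.memℓp_of_le (y := x) hCr2 (fun n => hNrb (x n))
    set NR : SeqD d → SeqD d := fun x => ⟨fun n => Nr (x n), hmemNr x⟩ with hNRdef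
    have hNRapp : ∀ (x : SeqD d) (n : Fin d → ℤ), NR x n = Nr (x n) := fun _ _ => rfl
    have hNRlip : ∀ x y : SeqD d, ‖NR x - NR y‖ ≤ (C r * 2) * ‖x - y‖ := by
      intro x y
      apply GWP.lp2_norm_le_of_le hCr2
      intro n
      have h1 : (NR x - NR y) n = Nr (x n) - Nr (y n) := by
        rw [lp.coeFn_sub, Pi.sub_apply, hNRapp, hNRapp]
      have h2 : (x - y) n = x n - y n := by rw [lp.coeFn_sub, Pi.sub_apply]
      rw [h1, h2]
      exact hNrlip _ _
    set G : SeqD d → SeqD d := fun x => (-Complex.I) • (L x + NR x) with hGdef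
    set K₀ : ℝ≥0 := ‖L‖₊ + ⟨C r * 2, hCr2⟩ with hK₀def
    have hK₀val : (K₀ : ℝ) = ‖L‖ + C r * 2 := by
      rw [hK₀def]
      push_cast
      rfl
    have hGlip : LipschitzWith K₀ G := by
      apply LipschitzWith.of_dist_le_mul
      intro x y
      rw [dist_eq_norm, dist_eq_norm, hK₀val]
      have h1 : G x - G y = (-Complex.I) • ((L x - L y) + (NR x - NR y)) := by
        show (-Complex.I) • (L x + NR x) - (-Complex.I) • (L y + NR y) = _
        rw [← smul_sub]
        congr 1
        abel
      rw [h1, norm_smul]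
      have h2 : ‖-Complex.I‖ = 1 := by simp
      rw [h2, one_mul]
      have h3 : ‖L x - L y‖ ≤ ‖L‖ * ‖x - y‖ := by
        rw [← map_sub]
        exact L.le_opNorm _
      have h4 := hNRlip x y
      have h5 := norm_add_le (L x - L y) (NR x - NR y)
      nlinarith [norm_nonneg (x - y)]
    refine ⟨G, K₀, hGlip, ?_, ?_, ?_⟩
    · -- agreement on the ball of radius r
      intro x hx
      show (-Complex.I) • (L x + NR x) = (-Complex.I) • (L x + NN x)
      congr 2
      apply lp.ext
      funext n
      show Nr (x n) = N (x n)
      show N (GWP.cproj r (x n)) = N (x n)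
      rw [GWP.cproj_of_le ((lp.norm_apply_le_norm (by norm_num) x n).trans hx)]
    · -- conservation for G-flows
      intro u hu t
      have hNRim : ∀ x : SeqD d, (inner (𝕜 := ℂ) x (NR x)).im = 0 := fun x =>
        GWP.inner_comp_im_zero Nr hNrReal x (NR x) (fun n => rfl)
      exact GWP.conserve L hL NR hNRim (fun s => hu s) t
    · -- global existence for the truncated flow
      intro f
      obtain ⟨u, hu0, huflow⟩ := GWP.exists_global_flow G K₀ hGlip f
      exact ⟨u, hu0, huflow⟩
  refine ⟨?_, hconsN, ?_⟩
  · -- existence and uniqueness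
    intro f
    have hr : (0:ℝ) < ‖f‖ + 1 := by positivity
    obtain ⟨G, K₀, hGlip, hGball, hGcons, hGex⟩ := master (‖f‖ + 1) hr
    obtain ⟨u, hu0, huflow⟩ := hGex f
    have hcons' : ∀ t, ‖u t‖ = ‖f‖ := fun t => by
      rw [← hu0]; exact hGcons u huflow t
    have hball : ∀ t, ‖u t‖ ≤ ‖f‖ + 1 := fun t => by rw [hcons' t]; linarith
    have hflowN : ∀ t, HasDerivAt u ((-Complex.I) • (L (u t) + NN (u t))) t := by
      intro t
      rw [← hGball (u t) (hball t)]
      exact huflow t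
    have hIsSolu : IsSol L N f u := by
      refine ⟨?_, hu0, ?_⟩
      · rw [contDiff_one_iff_deriv]
        have hdiff : Differentiable ℝ u := fun t => (huflow t).differentiableAt
        refine ⟨hdiff, ?_⟩
        have hderiv : deriv u = fun t => G (u t) := funext fun t => (huflow t).deriv
        rw [hderiv]
        exact hGlip.continuous.comp hdiff.continuous
      · intro t n
        have hd : deriv u t = (-Complex.I) • (L (u t) + NN (u t)) := (hflowN t).deriv
        rw [hd]
        have hcomp : (((-Complex.I) • (L (u t) + NN (u t)) : SeqD d)) n
            = -Complex.I * ((L (u t)) n + N (u t n)) := by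
          rw [lp.coeFn_smul, Pi.smul_apply, lp.coeFn_add, Pi.add_apply, hNNapp, smul_eq_mul]
        rw [hcomp, ← mul_assoc]
        simp [Complex.I_mul_I]
    refine ⟨u, hIsSolu, ?_⟩
    intro v hv
    have hvball : ∀ t, ‖v t‖ ≤ ‖f‖ + 1 := fun t => by
      rw [hconsN f v hv t]; linarith
    have hvflow : ∀ t, HasDerivAt v (G (v t)) t := by
      intro t
      rw [hGball (v t) (hvball t)]
      exact hXval f v hv t
    exact GWP.flow_unique G K₀ hGlip hvflow huflow (by rw [hv.2.1, hu0])
  · -- Lipschitz dependence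
    intro R T hR hT
    obtain ⟨G, K₀, hGlip, hGball, hGcons, hGex⟩ := master R hR
    refine ⟨Real.exp ((K₀:ℝ) * T), ?_⟩
    intro f g u v hu hv hfR hgR t ht
    have huflow : ∀ t, HasDerivAt u (G (u t)) t := by
      intro s
      rw [hGball (u s) (by rw [hconsN f u hu s]; exact hfR)]
      exact hXval f u hu s
    have hvflow : ∀ t, HasDerivAt v (G (v t)) t := by
      intro s
      rw [hGball (v s) (by rw [hconsN g v hv s]; exact hgR)]
      exact hXval g v hv s
    have h1 := GWP.flow_dist_two_sided G K₀ hGlip huflow hvflow T hT.le t ht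
    rw [dist_eq_norm, dist_eq_norm, hu.2.1, hv.2.1] at h1
    calc ‖u t - v t‖ ≤ ‖f - g‖ * Real.exp ((K₀:ℝ) * T) := h1
      _ = Real.exp ((K₀:ℝ) * T) * ‖f - g‖ := by ring
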